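/- arXiv:2212.09370 — 7 statements merged into one kernel-verified Lean document; each statement's English description precedes it below -/
import Mathlib

section
/- Let A be an n×n complex matrix and P(w) = Π_{ℓ=1}^{p}(w − w_ℓ) a polynomial with P(A) = 0. Define E_k = Π_{ℓ=1}^{k}(A − w_ℓ)·ℂⁿ and N_k = dim E_k for k = 0,...,p. Then tr A = Σ_{k=1}^{p} w_k (N_{k−1} − N_k). -/
/-!
The subspaces `E_k` form a flag `ℂⁿ = E_0 ⊇ E_1 ⊇ ⋯ ⊇ E_p = 0` of `A`-invariant subspaces with
`(A - w_k) E_k ⊆ E_{k+1}`, because `A` commutes with the partial products. So `A` acts on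
`E_k / E_{k+1}` as the scalar `w_k`, and the trace of `A` on `E_k` exceeds its trace on `E_{k+1}` by
`w_k (N_k - N_{k+1})`; telescoping from `E_0 = ℂⁿ` down to `E_p = 0` gives the formula.
-/

open Module

namespace LinearMap

variable {K V : Type*} [Field K] [AddCommGroup V] [Module K V] [FiniteDimensional K V]

-- `f - c` takes values in `F`, so its trace may be computed on `F`.
theorem trace_eq_mul_finrank_sub_add_trace_restrict (f : End K V) (c : K) {F : Submodule K V}
    (hF : ∀ x ∈ F, f x ∈ F) (hc : ∀ x, f x - c • x ∈ F) :
    trace K V f = c * (finrank K V - finrank K F) + trace K F (f.restrict hF) := by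
  have key := trace_restrict_eq_of_forall_mem F (f - c • 1) hc
  rw [← restrict_sub hF (fun x hx => F.smul_mem c hx), restrict_smul_one] at key
  simp only [map_sub, map_smul, trace_one, smul_eq_mul] at key
  linear_combination -key

theorem trace_restrict_eq_mul_finrank_sub_add_trace_restrict (f : End K V) (c : K)
    {E F : Submodule K V} (hFE : F ≤ E) (hE : ∀ x ∈ E, f x ∈ E) (hF : ∀ x ∈ F, f x ∈ F)
    (hc : ∀ x ∈ E, f x - c • x ∈ F) :
    trace K E (f.restrict hE) = c * (finrank K E - finrank K F) + trace K F (f.restrict hF) := by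
  let e := Submodule.comapSubtypeEquivOfLe hFE
  have hF' : ∀ x ∈ F.comap E.subtype, f.restrict hE x ∈ F.comap E.subtype := fun x hx => hF x hx
  rw [trace_eq_mul_finrank_sub_add_trace_restrict _ c hF' (fun x => hc x x.2), e.finrank_eq,
    ← trace_conj' _ e]
  congr 3

theorem trace_eq_sum_of_flag {p : ℕ} (f : End K V) (w : Fin p → K) (E : ℕ → Submodule K V)
    (hE : ∀ k, ∀ x ∈ E k, f x ∈ E k) (h0 : E 0 = ⊤) (hp : E p = ⊥)
    (hle : ∀ k : Fin p, E (k + 1) ≤ E k)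
    (hstep : ∀ k : Fin p, ∀ x ∈ E k, f x - w k • x ∈ E (k + 1)) :
    trace K V f = ∑ k : Fin p, w k * (finrank K (E k) - finrank K (E (k + 1))) := by
  set t : ℕ → K := fun k => trace K (E k) (f.restrict (hE k))
  have ht0 : t 0 = trace K V f :=
    trace_restrict_eq_of_forall_mem _ _ fun x => h0 ▸ Submodule.mem_top
  have htp : t p = 0 := by
    have : Subsingleton (E p) := Submodule.subsingleton_iff_eq_bot.mpr hp
    simp [t, Subsingleton.elim (f.restrict (hE p)) 0]
  calc trace K V f = t 0 - t p := by rw [ht0, htp, sub_zero]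
    _ = ∑ k ∈ Finset.range p, (t k - t (k + 1)) := (Finset.sum_range_sub' t p).symm
    _ = ∑ k : Fin p, (t k - t (k + 1)) :=
      (Fin.sum_univ_eq_sum_range (fun k => t k - t (k + 1)) p).symm
    _ = _ := Finset.sum_congr rfl fun k _ => sub_eq_iff_eq_add.mpr <|
      trace_restrict_eq_mul_finrank_sub_add_trace_restrict f (w k) (hle k) (hE k) (hE (k + 1))
        (hstep k)

theorem trace_eq_sum_finrank_range_of_prod {p : ℕ} (f : End K V) (w : Fin p → K)
    (T : ℕ → End K V) (h0 : T 0 = 1) (hp : T p = 0) (hcomm : ∀ k, Commute f (T k))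
    (hsucc : ∀ k : Fin p, T (k + 1) = T k * (f - w k • 1)) :
    trace K V f = ∑ k : Fin p, w k * (finrank K (range (T k)) - finrank K (range (T (k + 1)))) := by
  refine trace_eq_sum_of_flag f w (fun k => range (T k)) ?_ (by simp [h0, End.one_eq_id])
    (by simp [hp]) (fun k => hsucc k ▸ range_comp_le_range _ _) ?_
  · rintro k _ ⟨y, rfl⟩
    exact ⟨f y, (LinearMap.congr_fun (hcomm k).eq y).symm⟩
  · rintro k _ ⟨y, rfl⟩
    refine ⟨y, ?_⟩
    rw [hsucc k, ← ((hcomm k).sub_left ((Commute.one_left _).smul_left (w k))).eq]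
    simp

end LinearMap

theorem commute_list_prod_map_sub_smul_one {K R ι : Type*} [CommSemiring K] [Ring R]
    [Algebra K R] (a : R) (w : ι → K) (L : List ι) :
    Commute a (L.map fun l => a - w l • (1 : R)).prod :=
  Commute.list_prod_right _ _ <| by
    simpa using fun l _ => (Commute.refl a).sub_right ((Commute.one_right a).smul_right (w l))

theorem List.prod_take_succ_map_finRange {M : Type*} [Monoid M] {p : ℕ} (g : Fin p → M)
    (k : Fin p) :
    (((List.finRange p).take (k + 1)).map g).prod =
      (((List.finRange p).take k).map g).prod * g k := by
  rw [List.map_take, List.map_take, List.prod_take_succ _ _ (by simp)]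
  simp

/-- Let `A` be an `n×n` complex matrix annihilated by
`P(w) = ∏_{ℓ=1}^{p} (w - w_ℓ)`.  With `M k = ∏_{ℓ≤k} (A - w_ℓ)` (ordered product of the
first `k` factors), `E_k = M k · ℂⁿ` and `N_k = dim E_k`, one has
`tr A = ∑_{k=1}^{p} w_k (N_{k-1} - N_k)`. -/
theorem trace_eq_sum_exponents (n p : ℕ) (A : Matrix (Fin n) (Fin n) ℂ) (w : Fin p → ℂ)
    (M : ℕ → Matrix (Fin n) (Fin n) ℂ)
    (hM : ∀ k, M k =
      (((List.finRange p).take k).map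
        (fun ℓ => A - w ℓ • (1 : Matrix (Fin n) (Fin n) ℂ))).prod)
    (hP : M p = 0)
    (N : ℕ → ℕ)
    (hN : ∀ k, N k = Module.finrank ℂ (LinearMap.range (Matrix.toLin' (M k)))) :
    A.trace = ∑ k : Fin p, w k * ((N k.1 : ℂ) - (N (k.1 + 1) : ℂ)) := by
  have hcomm : ∀ k, Commute A (M k) := fun k => hM k ▸ commute_list_prod_map_sub_smul_one A w _
  have hsucc : ∀ k : Fin p, M (k + 1) = M k * (A - w k • 1) := fun k => by
    rw [hM, hM, List.prod_take_succ_map_finRange]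
  rw [← Matrix.trace_toLin'_eq, LinearMap.trace_eq_sum_finrank_range_of_prod (Matrix.toLin' A) w
    (fun k => Matrix.toLin' (M k)) (by simp [hM, End.one_eq_id]) (by simp [hP])
    (fun k => (hcomm k).map Matrix.toLinAlgEquiv')
    (fun k => by simp [hsucc k, End.mul_eq_comp, End.one_eq_id])]
  simp [hN]
end

section
/- Let A be an n×n complex matrix annihilated by Π_{a≤p}(w − w_a), fix an index j, and let E = Π_{a<j}(A − w_a)·ℂⁿ, an A-invariant subspace. If w_j ≠ w_{j+1}, then dim((A − w_{j+1})(A − w_j)E) = dim((A − w_j)(A − w_{j+1})E), and moreover dim((A − w_{j+1})E) = dim E + dim((A − w_{j+1})(A − w_j)E) − dim((A − w_j)E) ... specifically: setting N_{j−1} = dim E, N_j = dim((A−w_j)E), N_{j+1} = dim((A−w_{j+1})(A−w_j)E), N'_j = dim((A−w_{j+1})E), one has N'_j = N_{j+1} + N_{j−1} − N_j. -/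
/-! On the kernel of `A - w_{j+1}` the factor `A - w_j` acts as the nonzero scalar
`w_{j+1} - w_j`, so for an `A`-invariant `E` that kernel meets `(A - w_j)E` exactly where it
meets `E`. Rank–nullity for `A - w_{j+1}` on `E` and on `(A - w_j)E` then yields the reflection
identity; the equality of the two double images is the commutativity of the factors. -/

open Module

theorem Submodule.finrank_map_add_finrank_inf_ker {K V V₂ : Type*} [DivisionRing K]
    [AddCommGroup V] [Module K V] [AddCommGroup V₂] [Module K V₂] [FiniteDimensional K V]
    (f : V →ₗ[K] V₂) (S : Submodule K V) :
    finrank K (S.map f) + finrank K ↥(S ⊓ LinearMap.ker f) = finrank K S := by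
  have h := LinearMap.finrank_range_add_finrank_ker (f.domRestrict S)
  rwa [LinearMap.range_domRestrict, LinearMap.ker_domRestrict,
    (Submodule.equivMapOfInjective S.subtype S.injective_subtype _).finrank_eq,
    Submodule.map_comap_subtype] at h

theorem Submodule.map_map_comm_of_commute {R M : Type*} [Semiring R] [AddCommMonoid M]
    [Module R M] {f g : End R M} (h : Commute f g) (p : Submodule R M) :
    (p.map g).map f = (p.map f).map g := by
  rw [← Submodule.map_comp, ← Submodule.map_comp, ← End.mul_eq_comp, ← End.mul_eq_comp, h.eq]

theorem LinearMap.range_mem_invtSubmodule_of_commute {R M : Type*} [Semiring R] [AddCommMonoid M]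
    [Module R M] {f g : End R M} (h : Commute f g) : range g ∈ f.invtSubmodule := by
  rw [End.mem_invtSubmodule_iff_forall_mem_of_mem]
  rintro _ ⟨y, rfl⟩
  exact ⟨f y, (LinearMap.congr_fun h.eq y).symm⟩

section Field

variable {K V : Type*} [Field K] [AddCommGroup V] [Module K V]

theorem Module.End.commute_sub_smul_one (T : End K V) (a b : K) :
    Commute (T - a • 1) (T - b • 1) :=
  ((Commute.refl T).sub_right ((Commute.one_right T).smul_right b)).sub_left
    ((Commute.one_left _).smul_left a)

theorem Module.End.map_sub_smul_one_le {T : End K V} {E : Submodule K V}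
    (hE : E ∈ T.invtSubmodule) (a : K) : E.map (T - a • 1) ≤ E := by
  rintro _ ⟨x, hx, rfl⟩
  exact E.sub_mem (hE hx) (E.smul_mem a hx)

theorem Module.End.map_sub_smul_one_inf_ker {T : End K V} {a b : K} (hab : a ≠ b)
    {E : Submodule K V} (hE : E ∈ T.invtSubmodule) :
    E.map (T - a • 1) ⊓ LinearMap.ker (T - b • 1) = E ⊓ LinearMap.ker (T - b • 1) := by
  refine le_antisymm (inf_le_inf_right _ (End.map_sub_smul_one_le hE a)) ?_
  rintro x ⟨hxE, hxb⟩
  have hTx : T x = b • x := sub_eq_zero.mp hxb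
  refine ⟨⟨(b - a)⁻¹ • x, E.smul_mem _ hxE, ?_⟩, hxb⟩
  rw [map_smul, LinearMap.sub_apply, hTx, LinearMap.smul_apply, End.one_apply, ← sub_smul,
    smul_smul, inv_mul_cancel₀ (sub_ne_zero.mpr hab.symm), one_smul]

theorem Module.End.finrank_map_sub_smul_one_add_finrank_map_sub_smul_one [FiniteDimensional K V]
    {T : End K V} {a b : K} (hab : a ≠ b) {E : Submodule K V} (hE : E ∈ T.invtSubmodule) :
    finrank K (E.map (T - b • 1)) + finrank K (E.map (T - a • 1)) =
      finrank K ((E.map (T - a • 1)).map (T - b • 1)) + finrank K E := by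
  have hrankE := Submodule.finrank_map_add_finrank_inf_ker (T - b • 1) E
  have hrankImage := Submodule.finrank_map_add_finrank_inf_ker (T - b • 1) (E.map (T - a • 1))
  rw [End.map_sub_smul_one_inf_ker hab hE] at hrankImage
  omega

end Field

theorem swap_factors_reflection_general (n : ℕ) (A : Matrix (Fin n) (Fin n) ℂ) (w : ℕ → ℂ)
    (j : ℕ) (hw : w j ≠ w (j + 1))
    (E : Submodule ℂ (Fin n → ℂ))
    (hE : E = LinearMap.range (Matrix.toLin'
      (((List.range j).map (fun a => A - w a • (1 : Matrix (Fin n) (Fin n) ℂ))).prod))) :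
    Module.finrank ℂ
        (Submodule.map (Matrix.toLin' (A - w (j+1) • (1 : Matrix (Fin n) (Fin n) ℂ)))
          (Submodule.map (Matrix.toLin' (A - w j • (1 : Matrix (Fin n) (Fin n) ℂ))) E))
      = Module.finrank ℂ
        (Submodule.map (Matrix.toLin' (A - w j • (1 : Matrix (Fin n) (Fin n) ℂ)))
          (Submodule.map (Matrix.toLin' (A - w (j+1) • (1 : Matrix (Fin n) (Fin n) ℂ))) E))
    ∧ Module.finrank ℂ
        (Submodule.map (Matrix.toLin' (A - w (j+1) • (1 : Matrix (Fin n) (Fin n) ℂ))) E)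
      + Module.finrank ℂ
        (Submodule.map (Matrix.toLin' (A - w j • (1 : Matrix (Fin n) (Fin n) ℂ))) E)
      = Module.finrank ℂ
        (Submodule.map (Matrix.toLin' (A - w (j+1) • (1 : Matrix (Fin n) (Fin n) ℂ)))
          (Submodule.map (Matrix.toLin' (A - w j • (1 : Matrix (Fin n) (Fin n) ℂ))) E))
      + Module.finrank ℂ E := by
  set T : End ℂ (Fin n → ℂ) := Matrix.toLin' A
  have htoLin : ∀ c : ℂ, Matrix.toLin' (A - c • 1) = T - c • 1 := fun c => by
    rw [map_sub, map_smul, Matrix.toLin'_one]; rfl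
  have hcomm : Commute A (((List.range j).map (fun a => A - w a • 1)).prod) :=
    Commute.list_prod_right _ _ fun _ hM => by
      obtain ⟨a, -, rfl⟩ := List.mem_map.mp hM
      exact (Commute.refl A).sub_right ((Commute.one_right A).smul_right (w a))
  have hinv : E ∈ T.invtSubmodule :=
    hE ▸ LinearMap.range_mem_invtSubmodule_of_commute (hcomm.map Matrix.toLinAlgEquiv')
  rw [htoLin, htoLin]
  exact ⟨by rw [Submodule.map_map_comm_of_commute (End.commute_sub_smul_one T _ _)],
    End.finrank_map_sub_smul_one_add_finrank_map_sub_smul_one hw hinv⟩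

/-- Let `A` be annihilated by `∏_{a<p}(w - w_a)`, fix `j` with `j+1 < p`,
and let `E = ∏_{a<j}(A - w_a)·ℂⁿ`.  If `w j ≠ w (j+1)` then the dimensions of the two
double images agree, and setting `N_{j-1} = dim E`, `N_j = dim (A-w_j)E`,
`N_{j+1} = dim (A-w_{j+1})(A-w_j)E`, `N'_j = dim (A-w_{j+1})E`, one has the
Weyl-reflection identity `N'_j = N_{j+1} + N_{j-1} - N_j` (stated additively). -/
theorem swap_factors_reflection (n p : ℕ) (A : Matrix (Fin n) (Fin n) ℂ) (w : ℕ → ℂ)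
    (hP : (((List.range p).map
      (fun a => A - w a • (1 : Matrix (Fin n) (Fin n) ℂ))).prod) = 0)
    (j : ℕ) (hj : j + 1 < p) (hw : w j ≠ w (j + 1))
    (E : Submodule ℂ (Fin n → ℂ))
    (hE : E = LinearMap.range (Matrix.toLin'
      (((List.range j).map (fun a => A - w a • (1 : Matrix (Fin n) (Fin n) ℂ))).prod))) :
    Module.finrank ℂ
        (Submodule.map (Matrix.toLin' (A - w (j+1) • (1 : Matrix (Fin n) (Fin n) ℂ)))
          (Submodule.map (Matrix.toLin' (A - w j • (1 : Matrix (Fin n) (Fin n) ℂ))) E))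
      = Module.finrank ℂ
        (Submodule.map (Matrix.toLin' (A - w j • (1 : Matrix (Fin n) (Fin n) ℂ)))
          (Submodule.map (Matrix.toLin' (A - w (j+1) • (1 : Matrix (Fin n) (Fin n) ℂ))) E))
    ∧ Module.finrank ℂ
        (Submodule.map (Matrix.toLin' (A - w (j+1) • (1 : Matrix (Fin n) (Fin n) ℂ))) E)
      + Module.finrank ℂ
        (Submodule.map (Matrix.toLin' (A - w j • (1 : Matrix (Fin n) (Fin n) ℂ))) E)
      = Module.finrank ℂ
        (Submodule.map (Matrix.toLin' (A - w (j+1) • (1 : Matrix (Fin n) (Fin n) ℂ)))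
          (Submodule.map (Matrix.toLin' (A - w j • (1 : Matrix (Fin n) (Fin n) ℂ))) E))
      + Module.finrank ℂ E :=
  swap_factors_reflection_general n A w j hw E hE
end

section
/- Let A be an n×n Hermitian matrix whose eigenvalues all lie in {w_1,...,w_p} with w_1 ≤ w_2 ≤ ... ≤ w_p real. Then by induction there exist matrices X_ℓ of sizes N_{ℓ−1} × N_ℓ (where N_0 = n and N_ℓ = rank Π_{a≤ℓ}(A − w_a)) such that X_1 X_1† = A − w_1·𝟙 and X_{ℓ+1} X_{ℓ+1}† = X_ℓ† X_ℓ − (w_{ℓ+1} − w_ℓ)·𝟙 for every ℓ ≥ 1, each right-hand side being positive semidefinite of rank N_ℓ... In particular, for the base step: if X X† = A − w·𝟙 with X of size n×N and full column rank N, then X† X − (w' − w)·𝟙 is Hermitian, and it is positive semidefinite of rank equal to rank((A − w)(A − w')) whenever w ≤ w' and all eigenvalues of A lie in {w_1,...,w_p}. -/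
/-!
Put `B = Xᴴ X` and `c = w' - w`. Since `X Xᴴ = A - w`, we get
`X (B - c) Xᴴ = (A - w)(A - w - c) = (A - w)(A - w')`. Full column rank gives `X` a left
inverse `L`, so `B - c = L (A - w)(A - w') Lᴴ`: conjugation by `X` and by `L` both preserve
positive semidefiniteness and can only lower rank, hence `B - c` and `(A - w)(A - w')` have the
same rank and the first is positive semidefinite as soon as the second is. The second is, by
functional calculus: `(x - w)(x - w') ≥ 0` on the spectrum of `A`, because no `w_k` lies
strictly between the consecutive values `w ≤ w'`.
-/

open Matrix
open scoped ComplexOrder MatrixOrder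

theorem Monotone.apply_notMem_Ioo_of_covBy {ι α : Type*} [LinearOrder ι] [Preorder α]
    {f : ι → α} (hf : Monotone f) {i j : ι} (hij : i ⋖ j) (k : ι) :
    f k ∉ Set.Ioo (f i) (f j) := by
  rintro ⟨hik, hkj⟩
  rcases lt_or_ge k j with hk | hk
  · exact (hf (hij.le_of_lt hk)).not_gt hik
  · exact (hf hk).not_gt hkj

theorem sub_mul_sub_nonneg_of_notMem_Ioo {α : Type*} [Ring α] [LinearOrder α]
    [IsStrictOrderedRing α] {a b x : α} (hab : a ≤ b) (hx : x ∉ Set.Ioo a b) :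
    0 ≤ (x - a) * (x - b) := by
  rw [Set.mem_Ioo, not_and_or, not_lt, not_lt] at hx
  rcases hx with hxa | hbx
  · exact mul_nonneg_of_nonpos_of_nonpos (sub_nonpos.2 hxa) (sub_nonpos.2 (hxa.trans hab))
  · exact mul_nonneg (sub_nonneg.2 (hab.trans hbx)) (sub_nonneg.2 hbx)

theorem Matrix.IsHermitian.posSemidef_sub_smul_one_mul_sub_smul_one {n 𝕜 : Type*} [Fintype n]
    [DecidableEq n] [RCLike 𝕜]
    {A : Matrix n n 𝕜} (hA : A.IsHermitian) {a b : ℝ}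
    (h : ∀ j, 0 ≤ (hA.eigenvalues j - a) * (hA.eigenvalues j - b)) :
    ((A - (a : 𝕜) • 1) * (A - (b : 𝕜) • 1)).PosSemidef := by
  have hcfc : cfc (fun x : ℝ => (x - a) * (x - b)) A
      = (A - (a : 𝕜) • 1) * (A - (b : 𝕜) • 1) := by
    rw [cfc_mul (fun x : ℝ => x - a) (fun x => x - b) A, cfc_sub _ _ A, cfc_sub _ _ A,
      cfc_id' ℝ A, cfc_const a A, cfc_const b A, Algebra.algebraMap_eq_smul_one,
      Algebra.algebraMap_eq_smul_one,
      RCLike.real_smul_eq_coe_smul (K := 𝕜) a, RCLike.real_smul_eq_coe_smul (K := 𝕜) b]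
  rw [← hcfc, ← nonneg_iff_posSemidef]
  refine cfc_nonneg fun x hx => ?_
  obtain ⟨j, rfl⟩ := hA.spectrum_real_eq_range_eigenvalues ▸ hx
  exact h j

theorem Matrix.isUnit_of_rank_eq_card {ι K : Type*} [Fintype ι] [DecidableEq ι] [Field K]
    {B : Matrix ι ι K} (h : B.rank = Fintype.card ι) : IsUnit B := by
  refine linearIndependent_cols_iff_isUnit.mp (linearIndependent_iff_card_eq_finrank_span.mpr ?_)
  rw [Set.finrank, ← rank_eq_finrank_span_cols, h]

theorem Matrix.exists_mul_eq_one_of_rank_eq_card {m n 𝕜 : Type*} [Fintype m] [Fintype n]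
    [DecidableEq n] [RCLike 𝕜] {X : Matrix m n 𝕜} (hX : X.rank = Fintype.card n) :
    ∃ L : Matrix n m 𝕜, L * X = 1 := by
  have hB : IsUnit (Xᴴ * X) := isUnit_of_rank_eq_card (by rw [rank_conjTranspose_mul_self, hX])
  exact ⟨(Xᴴ * X)⁻¹ * Xᴴ, by
    rw [Matrix.mul_assoc, nonsing_inv_mul _ ((isUnit_iff_isUnit_det _).mp hB)]⟩

theorem Matrix.PosSemidef.of_mul_mul_conjTranspose {m n 𝕜 : Type*} [Fintype m] [Fintype n]
    [DecidableEq n] [RCLike 𝕜] {L : Matrix n m 𝕜} {X : Matrix m n 𝕜} (hLX : L * X = 1)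
    {D : Matrix n n 𝕜} (h : (X * D * Xᴴ).PosSemidef) : D.PosSemidef := by
  have := h.mul_mul_conjTranspose_same L
  rwa [← Matrix.mul_assoc, ← Matrix.mul_assoc, hLX, Matrix.one_mul, Matrix.mul_assoc,
    ← conjTranspose_mul, hLX, conjTranspose_one, Matrix.mul_one] at this

theorem Matrix.rank_mul_mul_eq_of_mul_eq_one {l m o R : Type*} [Fintype l] [Fintype m]
    [Fintype o] [DecidableEq m] [CommRing R] [StrongRankCondition R]
    {L : Matrix m l R} {X : Matrix l m R} {Y : Matrix m o R} {Z : Matrix o m R}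
    (hLX : L * X = 1) (hYZ : Y * Z = 1) (D : Matrix m m R) : (X * D * Y).rank = D.rank := by
  refine le_antisymm ((rank_mul_le_left _ _).trans (rank_mul_le_right _ _)) ?_
  calc D.rank = (L * (X * D * Y) * Z).rank := by
        rw [← Matrix.mul_assoc, ← Matrix.mul_assoc, hLX, Matrix.one_mul, Matrix.mul_assoc, hYZ,
          Matrix.mul_one]
    _ ≤ (X * D * Y).rank := (rank_mul_le_left _ _).trans (rank_mul_le_right _ _)

theorem Matrix.mul_conjTranspose_mul_sub_smul_one_mul {m n R : Type*} [Fintype m] [Fintype n]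
    [DecidableEq m] [DecidableEq n] [CommRing R] [StarRing R]
    (X : Matrix m n R) (c : R) :
    X * (Xᴴ * X - c • 1) * Xᴴ = X * Xᴴ * (X * Xᴴ - c • 1) := by
  simp only [Matrix.mul_sub, Matrix.sub_mul, Matrix.mul_smul, Matrix.smul_mul, Matrix.mul_one,
    Matrix.mul_assoc]

/-- inductive step of the Hermitian factorization: `A` Hermitian with all
eigenvalues among `w₁ ≤ … ≤ w_p`, consecutive values `w := w_ℓ ≤ w' := w_{ℓ+1}`.  If
`X Xᴴ = A - w·𝟙` with `X` of size `n × N` of full column rank `N`, then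
`Xᴴ X - (w' - w)·𝟙` is Hermitian, positive semidefinite, and of rank equal to
`rank ((A - w)(A - w'))`. -/
theorem hermitian_induction_step (n N p : ℕ) (A : Matrix (Fin n) (Fin n) ℂ)
    (hA : A.IsHermitian)
    (w : Fin p → ℝ) (hmono : Monotone w)
    (heig : ∀ j, ∃ ℓ, hA.eigenvalues j = w ℓ)
    (ℓ : ℕ) (hℓ : ℓ + 1 < p)
    (X : Matrix (Fin n) (Fin N) ℂ)
    (hX : X * Xᴴ = A - (w ⟨ℓ, by omega⟩ : ℂ) • (1 : Matrix (Fin n) (Fin n) ℂ))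
    (hrank : X.rank = N) :
    (Xᴴ * X - ((w ⟨ℓ + 1, hℓ⟩ - w ⟨ℓ, by omega⟩ : ℝ) : ℂ) •
        (1 : Matrix (Fin N) (Fin N) ℂ)).IsHermitian
    ∧ (Xᴴ * X - ((w ⟨ℓ + 1, hℓ⟩ - w ⟨ℓ, by omega⟩ : ℝ) : ℂ) •
        (1 : Matrix (Fin N) (Fin N) ℂ)).PosSemidef
    ∧ (Xᴴ * X - ((w ⟨ℓ + 1, hℓ⟩ - w ⟨ℓ, by omega⟩ : ℝ) : ℂ) •
        (1 : Matrix (Fin N) (Fin N) ℂ)).rank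
      = ((A - (w ⟨ℓ, by omega⟩ : ℂ) • (1 : Matrix (Fin n) (Fin n) ℂ))
          * (A - (w ⟨ℓ + 1, hℓ⟩ : ℂ) • (1 : Matrix (Fin n) (Fin n) ℂ))).rank := by
  have hcov : (⟨ℓ, by omega⟩ : Fin p) ⋖ ⟨ℓ + 1, hℓ⟩ := Fin.covBy_iff.mpr (Order.covBy_add_one ℓ)
  have hP : ((A - (w ⟨ℓ, by omega⟩ : ℂ) • 1) * (A - (w ⟨ℓ + 1, hℓ⟩ : ℂ) • 1)).PosSemidef :=
    hA.posSemidef_sub_smul_one_mul_sub_smul_one fun j => by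
      obtain ⟨k, hk⟩ := heig j
      exact hk ▸ sub_mul_sub_nonneg_of_notMem_Ioo (hmono hcov.le)
        (hmono.apply_notMem_Ioo_of_covBy hcov k)
  have hfactor : X * (Xᴴ * X - ((w ⟨ℓ + 1, hℓ⟩ - w ⟨ℓ, by omega⟩ : ℝ) : ℂ) • 1) * Xᴴ
      = (A - (w ⟨ℓ, by omega⟩ : ℂ) • 1) * (A - (w ⟨ℓ + 1, hℓ⟩ : ℂ) • 1) := by
    rw [mul_conjTranspose_mul_sub_smul_one_mul, hX, Complex.ofReal_sub, sub_smul, sub_sub,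
      ← add_sub_assoc, add_sub_cancel_left]
  obtain ⟨L, hL⟩ := exists_mul_eq_one_of_rank_eq_card (hrank.trans (Fintype.card_fin N).symm)
  have hD := PosSemidef.of_mul_mul_conjTranspose hL (hfactor ▸ hP)
  refine ⟨hD.isHermitian, hD, ?_⟩
  have hXL : Xᴴ * Lᴴ = 1 := by rw [← conjTranspose_mul, hL, conjTranspose_one]
  rw [← hfactor, rank_mul_mul_eq_of_mul_eq_one hL hXL]
end

section
/- Let G_1,...,G_{s−1} be the (s−1)n × (s−1)n complex matrices with n×n blocks (G_i)_{jk} = δ_{ij}(A_k + δ_{ik} λ 𝟙), where A_1,...,A_{s−1} are n×n matrices and λ ∈ ℂ. Then the subspace V = (ker A_1 ⊕ ker A_2 ⊕ ... ⊕ ker A_{s−1}) + ker(Σ_i G_i) of ℂ^{(s−1)n} is invariant under all G_i. -/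
/-!
A vector `x` on `ι × κ` has blocks `x_k = x (k, ·)`. The only nonzero block of `G i x` is the
`i`-th, and it equals `∑ k, A k x_k + λ x_i`, which is also the `i`-th block of `(∑ i, G i) x`.
Hence `G i` kills `ker (∑ i, G i)`, and on `⨁ k, ker (A k)` it acts as `λ` times the projection
to the `i`-th block, which preserves `⨁ k, ker (A k)`.
-/

open Matrix

namespace Matrix

variable {R ι κ : Type*} [CommSemiring R] [Fintype ι] [DecidableEq ι] [Fintype κ]

theorem mulVec_eq_zero_iff_of_single_block {A : ι → Matrix κ κ R}
    {D : ι → Matrix (ι × κ) (ι × κ) R}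
    (hD : ∀ j j' k a b, D j (j', a) (k, b) = if j' = j ∧ k = j then A j a b else 0)
    (j : ι) (x : ι × κ → R) :
    D j *ᵥ x = 0 ↔ A j *ᵥ (fun b => x (j, b)) = 0 := by
  have hDx : ∀ j' a,
      (D j *ᵥ x) (j', a) = if j' = j then (A j *ᵥ fun b => x (j, b)) a else 0 := by
    intro j' a
    split_ifs with h
    · subst h
      simp [mulVec, dotProduct, Fintype.sum_prod_type, hD]
    · simp [mulVec, dotProduct, hD, h]
  constructor
  · intro h
    ext a
    simpa [hDx] using congrFun h (j, a)
  · intro h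
    ext ⟨j', a⟩
    simp [hDx, h]

variable [DecidableEq κ]

def IsMiddleConvolution (A : ι → Matrix κ κ R) (lam : R)
    (G : ι → Matrix (ι × κ) (ι × κ) R) : Prop :=
  ∀ i j k a b, G i (j, a) (k, b) = if j = i then (A k + if k = i then lam • 1 else 0) a b else 0

namespace IsMiddleConvolution

variable {A : ι → Matrix κ κ R} {lam : R} {G : ι → Matrix (ι × κ) (ι × κ) R}

theorem mulVec_apply (hG : IsMiddleConvolution A lam G) (i : ι) (x : ι × κ → R)
    (j : ι) (a : κ) :
    (G i *ᵥ x) (j, a) =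
      if j = i then ∑ k, (A k *ᵥ fun b => x (k, b)) a + lam * x (i, a) else 0 := by
  split_ifs with h
  · subst h
    simp [mulVec, dotProduct, Fintype.sum_prod_type, hG j, add_mul, Finset.sum_add_distrib,
      Matrix.ite_apply, ite_mul, one_apply, Finset.sum_ite_irrel]
  · simp [mulVec, dotProduct, hG i, h]

theorem sum_mulVec_apply (hG : IsMiddleConvolution A lam G) (x : ι × κ → R) (j : ι) (a : κ) :
    ((∑ i, G i) *ᵥ x) (j, a) = ∑ k, (A k *ᵥ fun b => x (k, b)) a + lam * x (j, a) := by
  simp [sum_mulVec, hG.mulVec_apply]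

theorem mulVec_apply_eq_ite_sum_mulVec (hG : IsMiddleConvolution A lam G) (i : ι)
    (x : ι × κ → R) (j : ι) (a : κ) :
    (G i *ᵥ x) (j, a) = if j = i then ((∑ i, G i) *ᵥ x) (i, a) else 0 := by
  rw [hG.mulVec_apply, hG.sum_mulVec_apply]

theorem mulVec_eq_zero_of_sum_mulVec_eq_zero (hG : IsMiddleConvolution A lam G) (i : ι)
    {x : ι × κ → R} (hx : (∑ i, G i) *ᵥ x = 0) : G i *ᵥ x = 0 := by
  ext ⟨j, a⟩
  simp [hG.mulVec_apply_eq_ite_sum_mulVec, hx]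

theorem mulVec_apply_of_blocks_mem_ker (hG : IsMiddleConvolution A lam G) (i : ι)
    {x : ι × κ → R} (hx : ∀ k, A k *ᵥ (fun b => x (k, b)) = 0) (j : ι) (a : κ) :
    (G i *ᵥ x) (j, a) = if j = i then lam * x (i, a) else 0 := by
  simp [hG.mulVec_apply, hx]

theorem blocks_mulVec_mem_ker (hG : IsMiddleConvolution A lam G) (i : ι)
    {x : ι × κ → R} (hx : ∀ k, A k *ᵥ (fun b => x (k, b)) = 0) (k : ι) :
    A k *ᵥ (fun b => (G i *ᵥ x) (k, b)) = 0 := by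
  simp only [hG.mulVec_apply_of_blocks_mem_ker i hx]
  split_ifs with h
  · subst h
    have hblock : (fun b => lam * x (k, b)) = lam • fun b => x (k, b) := rfl
    rw [hblock, mulVec_smul, hx, smul_zero]
  · exact mulVec_zero _

end IsMiddleConvolution

end Matrix

/-- With the middle-convolution matrices `G i` of block form
`(G i)_{jk} = δ_{ij}(A k + δ_{ik} λ 𝟙)` acting on `ℂ^{m·n}` (here `m = s - 1`), the
subspace `V = (ker A₁ ⊕ … ⊕ ker A_m) + ker (∑ i, G i)` is invariant under every `G i`.
The blockwise direct sum of kernels is encoded as `⨅ j, ker (D j)` where `D j` applies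
`A j` on the `j`-th block and `0` elsewhere. -/
theorem middle_convolution_invariant_subspace (m n : ℕ)
    (A : Fin m → Matrix (Fin n) (Fin n) ℂ) (lam : ℂ)
    (G : Fin m → Matrix (Fin m × Fin n) (Fin m × Fin n) ℂ)
    (hG : ∀ i j k a b, G i (j, a) (k, b) =
      if j = i then (A k + (if k = i then lam • (1 : Matrix (Fin n) (Fin n) ℂ) else 0)) a b
      else 0)
    (D : Fin m → Matrix (Fin m × Fin n) (Fin m × Fin n) ℂ)
    (hD : ∀ j j' k a b, D j (j', a) (k, b) = if j' = j ∧ k = j then A j a b else 0)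
    (V : Submodule ℂ (Fin m × Fin n → ℂ))
    (hV : V = (⨅ j, LinearMap.ker (Matrix.toLin' (D j)))
        ⊔ LinearMap.ker (Matrix.toLin' (∑ i, G i))) :
    ∀ i, V.map (Matrix.toLin' (G i)) ≤ V := by
  have hG' : IsMiddleConvolution A lam G := hG
  intro i
  subst hV
  rw [Submodule.map_sup]
  refine sup_le (le_sup_of_le_left ?_) (le_sup_of_le_right ?_)
  · rintro _ ⟨x, hx, rfl⟩
    simp only [SetLike.mem_coe, Submodule.mem_iInf, LinearMap.mem_ker, toLin'_apply,
      mulVec_eq_zero_iff_of_single_block hD] at hx ⊢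
    exact hG'.blocks_mulVec_mem_ker i hx
  · rintro _ ⟨x, hx, rfl⟩
    simp only [SetLike.mem_coe, LinearMap.mem_ker, toLin'_apply] at hx ⊢
    rw [hG'.mulVec_eq_zero_of_sum_mulVec_eq_zero i hx, mulVec_zero]
end

section
/- If E → ℙ¹ is a semistable elliptic surface with section, non-zero Euler characteristic, and exactly 4 singular fibers all of Kodaira type I_{m_a}, then its geometric genus p_g(E) = 0, i.e., χ(O_E) = 1 (equivalently the topological Euler characteristic is 12), so E is a rational elliptic surface. -/
/-! The Picard number is squeezed between the fiber components and the Lefschetz bound: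
`∑ mₐ - 2 = b₂ ≥ ρ + 2 p_g ≥ 2 + ∑ (mₐ - 1) + 2 p_g`, so `2 p_g ≤ s - 4`. With four fibers
this forces `p_g ≤ 0`, while `χ_top = 12 (p_g + 1) ≥ 4` forces `p_g ≥ 0`. -/

open Finset

theorem two_mul_pg_le_card_sub_four {ι : Type*} [Fintype ι] (m : ι → ℤ) (χtop b₂ pg ρ : ℤ)
    (hχ : χtop = ∑ a, m a) (hb₂ : b₂ = χtop - 2)
    (hρ₁ : 2 + ∑ a, (m a - 1) ≤ ρ) (hρ₂ : ρ ≤ b₂ - 2 * pg) :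
    2 * pg ≤ Fintype.card ι - 4 := by
  have hsum : ∑ a, (m a - 1) = χtop - Fintype.card ι := by simp [sum_sub_distrib, hχ]
  omega

theorem semistable_four_fibers_rational_general (s : ℕ) (hs : s = 4)
    (m : Fin s → ℤ) (hm : ∀ a, 1 ≤ m a)
    (χtop b₂ pg ρ : ℤ)
    (hχ : χtop = ∑ a, m a)
    (hb₂ : b₂ = χtop - 2)
    (hpg : χtop = 12 * (pg + 1))
    (hρ₁ : 2 + ∑ a, (m a - 1) ≤ ρ)
    (hρ₂ : ρ ≤ b₂ - 2 * pg) :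
    pg = 0 ∧ χtop = 12 := by
  subst hs
  have hpg_nonpos : 2 * pg ≤ 0 := by
    simpa using two_mul_pg_le_card_sub_four m χtop b₂ pg ρ hχ hb₂ hρ₁ hρ₂
  have hχ_ge : 4 ≤ χtop := by
    simpa [hχ] using card_nsmul_le_sum univ m 1 fun a _ => hm a
  omega

/-- A semistable elliptic surface over `ℙ¹` with section, non-zero Euler
characteristic, and exactly 4 singular fibers (all of type `I_{m_a}`, `m_a ≥ 1`) has
geometric genus `p_g = 0` and topological Euler characteristic `χ_top = 12` (hence is
rational).  The standard facts `χ_top = ∑ m_a`, `b₂ = χ_top - 2`,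
`χ_top = 12 (p_g + 1)`, `ρ ≥ 2 + ∑ (m_a - 1)` and `ρ ≤ b₂ - 2 p_g` are taken as
hypotheses. -/
theorem semistable_four_fibers_rational (s : ℕ) (hs : s = 4)
    (m : Fin s → ℤ) (hm : ∀ a, 1 ≤ m a)
    (χtop b₂ pg ρ : ℤ)
    (hχ : χtop = ∑ a, m a)
    (hχne : χtop ≠ 0)
    (hb₂ : b₂ = χtop - 2)
    (hpg : χtop = 12 * (pg + 1))
    (hρ₁ : 2 + ∑ a, (m a - 1) ≤ ρ)
    (hρ₂ : ρ ≤ b₂ - 2 * pg) :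
    pg = 0 ∧ χtop = 12 :=
  semistable_four_fibers_rational_general s hs m hm χtop b₂ pg ρ hχ hb₂ hpg hρ₁ hρ₂
end

section
/- For a relatively minimal semistable elliptic surface E → ℙ¹ with section and s singular fibers of types I_{m_1},...,I_{m_s} (each m_a ≥ 1), the geometric genus satisfies 2 p_g(E) ≤ s − 4. In particular s ≥ 4, and a semistable elliptic K3 surface (p_g = 1) has at least 6 singular fibers. -/
/-!
The Picard number is squeezed between the two bounds: the section, the fiber and the
`m_a - 1` non-identity components of each `I_{m_a}` fiber give `ρ ≥ 2 + χ_top - s`, while the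
Lefschetz `(1,1)` theorem gives `ρ ≤ b₂ - 2 p_g = χ_top - 2 - 2 p_g`; comparing them yields
`2 p_g ≤ s - 4`. Since every `m_a ≥ 1`, also `s ≤ χ_top = 12 (p_g + 1)`, which together with
`2 p_g ≤ s - 4` forces `p_g ≥ 0`, hence `s ≥ 4`, and `s ≥ 6` when `p_g = 1`.
-/

open Finset

theorem Finset.sum_sub_one_eq_sum_sub_card {ι R : Type*} [AddCommGroupWithOne R]
    (s : Finset ι) (f : ι → R) : ∑ a ∈ s, (f a - 1) = ∑ a ∈ s, f a - #s := by
  simp [sum_sub_distrib]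

theorem Finset.card_le_sum_of_one_le {ι R : Type*} [AddCommMonoidWithOne R] [PartialOrder R]
    [IsOrderedAddMonoid R] (s : Finset ι) {f : ι → R} (hf : ∀ a ∈ s, 1 ≤ f a) :
    (#s : R) ≤ ∑ a ∈ s, f a := by
  simpa using card_nsmul_le_sum s f 1 hf

theorem semistable_genus_inequality_general (s : ℕ)
    (m : Fin s → ℤ) (hm : ∀ a, 1 ≤ m a)
    (χtop b₂ pg ρ : ℤ)
    (hχ : χtop = ∑ a, m a)
    (hb₂ : b₂ = χtop - 2)
    (hpg : χtop = 12 * (pg + 1))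
    (hρ₁ : 2 + ∑ a, (m a - 1) ≤ ρ)
    (hρ₂ : ρ ≤ b₂ - 2 * pg) :
    2 * pg ≤ (s : ℤ) - 4 ∧ 4 ≤ s ∧ (pg = 1 → 6 ≤ s) := by
  have hρ_lower : 2 + (χtop - s) ≤ ρ := by
    simpa [sum_sub_one_eq_sum_sub_card, ← hχ] using hρ₁
  have hgenus : 2 * pg ≤ (s : ℤ) - 4 := by linarith
  have hs_le : (s : ℤ) ≤ χtop := by
    simpa [hχ] using card_le_sum_of_one_le univ fun a _ => hm a
  have hpg_nonneg : 0 ≤ pg := by omega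
  exact ⟨hgenus, by omega, fun _ => by omega⟩

/-- For a relatively minimal semistable elliptic surface over `ℙ¹` with
section and `s ≥ 1` singular fibers of types `I_{m_a}` (`m_a ≥ 1`), the geometric genus
satisfies `2 p_g ≤ s - 4`; in particular `s ≥ 4`, and `p_g = 1` (elliptic K3) forces
`s ≥ 6`.  The standard facts `χ_top = ∑ m_a`, `b₂ = χ_top - 2`, `χ_top = 12 (p_g + 1)`,
`ρ ≥ 2 + ∑ (m_a - 1)` and `ρ ≤ b₂ - 2 p_g` are taken as hypotheses. -/
theorem semistable_genus_inequality (s : ℕ) (hs : 1 ≤ s)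
    (m : Fin s → ℤ) (hm : ∀ a, 1 ≤ m a)
    (χtop b₂ pg ρ : ℤ)
    (hχ : χtop = ∑ a, m a)
    (hb₂ : b₂ = χtop - 2)
    (hpg : χtop = 12 * (pg + 1))
    (hρ₁ : 2 + ∑ a, (m a - 1) ≤ ρ)
    (hρ₂ : ρ ≤ b₂ - 2 * pg) :
    2 * pg ≤ (s : ℤ) - 4 ∧ 4 ≤ s ∧ (pg = 1 → 6 ≤ s) :=
  semistable_genus_inequality_general s m hm χtop b₂ pg ρ hχ hb₂ hpg hρ₁ hρ₂
end

section
/- For the reflection functor data at a sink σ with λ_σ ≠ 0: given linear maps X_v : X_{s(v)} → X_σ and X_{v*}: X_σ → X_{s(v)} for arrows v into σ satisfying Σ_v X_v X_{v*} = −λ_σ·𝟙_{X_σ}, define X_⊕ = ⊕_v X_{s(v)}, μ = Σ_v μ_v X_{v*} : X_σ → X_⊕ and π = −(1/λ_σ) Σ_v X_v π_v : X_⊕ → X_σ (with μ_v, π_v the canonical inclusions/projections). Then π μ = 𝟙_{X_σ}, hence μπ is an idempotent endomorphism of X_⊕, X_⊕ decomposes as im(μπ) ⊕ im(𝟙 −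 μπ), im(μπ) ≅ X_σ, and dim im(𝟙 − μπ) = Σ_v dim X_{s(v)} − dim X_σ. -/
/-!
The deformed preprojective relation says exactly that `π` is a retraction of `μ`:
`π μ = -λ⁻¹ ∑_v X_v X_{v*} = 𝟙`. The rest holds for any retraction `g` of a linear map `f`:
`f g` is idempotent, so its image and its kernel `im(𝟙 - f g)` are complementary, and since
`g` is onto, `im(f g) = im f`, which the injective map `f` identifies with its domain.
-/

open Module

namespace LinearMap

section Retraction

variable {R M N : Type*} [Semiring R] [AddCommMonoid M] [Module R M] [AddCommMonoid N]
  [Module R N] {f : M →ₗ[R] N} {g : N →ₗ[R] M}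

theorem isIdempotentElem_comp_of_comp_eq_id (h : g ∘ₗ f = id) : IsIdempotentElem (f ∘ₗ g) := by
  change f ∘ₗ (g ∘ₗ f) ∘ₗ g = f ∘ₗ g
  rw [h, id_comp]

theorem range_comp_of_comp_eq_id (h : g ∘ₗ f = id) : range (f ∘ₗ g) = range f :=
  range_comp_of_range_eq_top f <| range_eq_top.mpr fun x => ⟨f x, congr($h x)⟩

def rangeCompEquivOfCompEqId (h : g ∘ₗ f = id) : range (f ∘ₗ g) ≃ₗ[R] M :=
  (LinearEquiv.ofEq _ _ (range_comp_of_comp_eq_id h)).trans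
    (LinearEquiv.ofLeftInverse (g := g) fun x => congr($h x)).symm

end Retraction

theorem finrank_range_id_sub_comp_add_finrank_of_comp_eq_id {K M N : Type*} [DivisionRing K]
    [AddCommGroup M] [Module K M] [AddCommGroup N] [Module K N] [FiniteDimensional K N]
    {f : M →ₗ[K] N} {g : N →ₗ[K] M} (h : g ∘ₗ f = id) :
    finrank K (range (id - f ∘ₗ g)) + finrank K M = finrank K N := by
  have hfg : IsIdempotentElem (f ∘ₗ g) := isIdempotentElem_comp_of_comp_eq_id h
  rw [← IsIdempotentElem.ker_eq_range hfg, ← (rangeCompEquivOfCompEqId h).finrank_eq, add_comm]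
  exact Submodule.finrank_add_eq_of_isCompl (IsIdempotentElem.isCompl hfg)

theorem sum_comp_proj_comp_sum_single_comp {R ι M N : Type*} {φ : ι → Type*} [Semiring R]
    [Fintype ι] [DecidableEq ι] [AddCommMonoid M] [Module R M] [AddCommMonoid N] [Module R N]
    [∀ i, AddCommMonoid (φ i)] [∀ i, Module R (φ i)]
    (f : ∀ i, φ i →ₗ[R] M) (g : ∀ i, N →ₗ[R] φ i) :
    (∑ i, f i ∘ₗ proj i) ∘ₗ (∑ i, single R φ i ∘ₗ g i) = ∑ i, f i ∘ₗ g i := by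
  ext x
  simp

end LinearMap

theorem reflection_functor_core_general (ι : Type*) [Fintype ι] [DecidableEq ι]
    (Xσ : Type*) [AddCommGroup Xσ] [Module ℂ Xσ]
    (Xs : ι → Type*) [∀ v, AddCommGroup (Xs v)] [∀ v, Module ℂ (Xs v)]
    [∀ v, FiniteDimensional ℂ (Xs v)]
    (Xv : ∀ v, Xs v →ₗ[ℂ] Xσ) (Xvs : ∀ v, Xσ →ₗ[ℂ] Xs v)
    (lamσ : ℂ) (hlam : lamσ ≠ 0)
    (hrel : (∑ v, (Xv v).comp (Xvs v)) = -lamσ • (LinearMap.id : Xσ →ₗ[ℂ] Xσ))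
    (μ : Xσ →ₗ[ℂ] ∀ v, Xs v)
    (hμ : μ = ∑ v, (LinearMap.single ℂ Xs v).comp (Xvs v))
    (π : (∀ v, Xs v) →ₗ[ℂ] Xσ)
    (hπ : π = -lamσ⁻¹ • ∑ v, (Xv v).comp (LinearMap.proj v)) :
    π.comp μ = LinearMap.id
    ∧ (μ.comp π).comp (μ.comp π) = μ.comp π
    ∧ IsCompl (LinearMap.range (μ.comp π))
        (LinearMap.range ((LinearMap.id : (∀ v, Xs v) →ₗ[ℂ] ∀ v, Xs v) - μ.comp π))
    ∧ Nonempty ((LinearMap.range (μ.comp π)) ≃ₗ[ℂ] Xσ)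
    ∧ (finrank ℂ (LinearMap.range
          ((LinearMap.id : (∀ v, Xs v) →ₗ[ℂ] ∀ v, Xs v) - μ.comp π)) : ℤ)
        = (∑ v, (finrank ℂ (Xs v) : ℤ)) - (finrank ℂ Xσ : ℤ) := by
  have hπμ : π ∘ₗ μ = LinearMap.id := by
    rw [hπ, hμ, LinearMap.smul_comp, LinearMap.sum_comp_proj_comp_sum_single_comp, hrel,
      smul_smul, neg_mul_neg, inv_mul_cancel₀ hlam, one_smul]
  have hidem : IsIdempotentElem (μ ∘ₗ π) := LinearMap.isIdempotentElem_comp_of_comp_eq_id hπμ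
  have hcompl := LinearMap.IsIdempotentElem.isCompl hidem
  rw [LinearMap.IsIdempotentElem.ker_eq_range hidem] at hcompl
  have hdim := LinearMap.finrank_range_id_sub_comp_add_finrank_of_comp_eq_id hπμ
  rw [finrank_pi_fintype] at hdim
  refine ⟨hπμ, hidem, hcompl, ⟨LinearMap.rangeCompEquivOfCompEqId hπμ⟩, ?_⟩
  rw [← Nat.cast_sum, ← hdim]
  push_cast
  ring

/-- Linear-algebra core of the reflection functor at a sink `σ` with
`λ_σ ≠ 0`.  Given `X_v : X_{s(v)} → X_σ`, `X_{v*} : X_σ → X_{s(v)}` with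
`∑_v X_v X_{v*} = -λ_σ·𝟙`, set `X_⊕ = ⊕_v X_{s(v)}`, `μ = ∑_v μ_v X_{v*}` and
`π = -(1/λ_σ) ∑_v X_v π_v`.  Then `π μ = 𝟙`, `μπ` is idempotent,
`X_⊕ = im(μπ) ⊕ im(𝟙 - μπ)`, `im(μπ) ≅ X_σ`, and
`dim im(𝟙 - μπ) = ∑_v dim X_{s(v)} - dim X_σ`. -/
theorem reflection_functor_core (ι : Type*) [Fintype ι] [DecidableEq ι]
    (Xσ : Type*) [AddCommGroup Xσ] [Module ℂ Xσ] [FiniteDimensional ℂ Xσ]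
    (Xs : ι → Type*) [∀ v, AddCommGroup (Xs v)] [∀ v, Module ℂ (Xs v)]
    [∀ v, FiniteDimensional ℂ (Xs v)]
    (Xv : ∀ v, Xs v →ₗ[ℂ] Xσ) (Xvs : ∀ v, Xσ →ₗ[ℂ] Xs v)
    (lamσ : ℂ) (hlam : lamσ ≠ 0)
    (hrel : (∑ v, (Xv v).comp (Xvs v)) = -lamσ • (LinearMap.id : Xσ →ₗ[ℂ] Xσ))
    (μ : Xσ →ₗ[ℂ] ∀ v, Xs v)
    (hμ : μ = ∑ v, (LinearMap.single ℂ Xs v).comp (Xvs v))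
    (π : (∀ v, Xs v) →ₗ[ℂ] Xσ)
    (hπ : π = -lamσ⁻¹ • ∑ v, (Xv v).comp (LinearMap.proj v)) :
    π.comp μ = LinearMap.id
    ∧ (μ.comp π).comp (μ.comp π) = μ.comp π
    ∧ IsCompl (LinearMap.range (μ.comp π))
        (LinearMap.range ((LinearMap.id : (∀ v, Xs v) →ₗ[ℂ] ∀ v, Xs v) - μ.comp π))
    ∧ Nonempty ((LinearMap.range (μ.comp π)) ≃ₗ[ℂ] Xσ)
    ∧ (finrank ℂ (LinearMap.range
          ((LinearMap.id : (∀ v, Xs v) →ₗ[ℂ] ∀ v, Xs v) - μ.comp π)) : ℤ)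
        = (∑ v, (finrank ℂ (Xs v) : ℤ)) - (finrank ℂ Xσ : ℤ) :=
  reflection_functor_core_general ι Xσ Xs Xv Xvs lamσ hlam hrel μ hμ π hπ
end
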